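/- arXiv:1705.10460 — 8 statements merged into one kernel-verified Lean document; each statement's English description precedes it below -/
import Mathlib

section
/- Let n ≥ 3 be an integer. Let x₁, x₂, ..., xₙ and α₁, α₂, ..., αₙ be positive real numbers with α₁ + α₂ + ... + αₙ = π. Then, with xₙ₊₁ = x₁, we have ∑_{i=1}^n xᵢ xᵢ₊₁ cos αᵢ ≤ cos(π/n) · ∑_{i=1}^n xᵢ². -/
/-!
Put `zₖ = xₖ e^{iθₖ}` with `θₖ = α₀ + ⋯ + αₖ₋₁`. Then `xₖ xₖ₊₁ cos αₖ = Re (zₖ₊₁ z̄ₖ)`, and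
`θₙ = π` makes the last term fit as well once we set `zₙ = -z₀`. So the left side is the
Hermitian form of the antiperiodic shift. A discrete Fourier transform at the `n`-th roots of `-1`,
`ζⱼ = e^{(2j+1)πi/n}`, diagonalizes this shift:
`n ∑ zₖ₊₁ z̄ₖ = ∑ ζⱼ |ẑⱼ|²` and `n ∑ |zₖ|² = ∑ |ẑⱼ|²`. Since `Re ζⱼ ≤ cos (π/n)` for every `j`,
the inequality follows.
-/

open Real Finset

open Complex (I normSq)
open ComplexConjugate

theorem Real.cos_le_cos_of_le_of_le_two_pi_sub {a t : ℝ} (ha : 0 ≤ a) (hat : a ≤ t)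
    (hta : t ≤ 2 * π - a) : cos t ≤ cos a := by
  rcases le_total t π with htπ | hπt
  · exact cos_le_cos_of_nonneg_of_le_pi ha htπ hat
  · rw [← cos_two_pi_sub t]
    exact cos_le_cos_of_nonneg_of_le_pi ha (by linarith) (by linarith)

theorem re_ofReal_mul_exp_mul_conj (a b s t : ℝ) :
    (a * Complex.exp (s * I) * conj (b * Complex.exp (t * I))).re = a * b * cos (s - t) := by
  have : a * Complex.exp (s * I) * conj (b * Complex.exp (t * I)) =
      ↑(a * b) * Complex.exp (↑(s - t) * I) := by
    rw [map_mul, Complex.conj_ofReal, ← Complex.exp_conj, map_mul, Complex.conj_ofReal,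
      Complex.conj_I, mul_mul_mul_comm, ← Complex.exp_add]
    push_cast
    ring_nf
  rw [this, Complex.re_ofReal_mul, Complex.exp_ofReal_mul_I_re]

theorem normSq_ofReal_mul_exp_ofReal_mul_I (a t : ℝ) :
    normSq (a * Complex.exp (t * I)) = a ^ 2 := by
  rw [Complex.normSq_mul, Complex.normSq_ofReal, ← Complex.sq_norm, Complex.norm_exp_ofReal_mul_I]
  ring

noncomputable def negOneRoot (n j : ℕ) : ℂ :=
  Complex.exp (↑((2 * j + 1) * π / n) * I)

theorem norm_negOneRoot (n j : ℕ) : ‖negOneRoot n j‖ = 1 :=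
  Complex.norm_exp_ofReal_mul_I _

theorem negOneRoot_ne_zero (n j : ℕ) : negOneRoot n j ≠ 0 :=
  Complex.exp_ne_zero _

theorem negOneRoot_pow_self {n : ℕ} (hn : 0 < n) (j : ℕ) : negOneRoot n j ^ n = -1 := by
  rw [negOneRoot, ← Complex.exp_nat_mul]
  have : (n : ℂ) * (↑((2 * j + 1) * π / n) * I) = j * (2 * π * I) + π * I := by
    have : (n : ℂ) ≠ 0 := by exact_mod_cast hn.ne'
    push_cast
    field_simp
  rw [this, Complex.exp_add, Complex.exp_nat_mul_two_pi_mul_I, Complex.exp_pi_mul_I, one_mul]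

theorem re_negOneRoot_le {n j : ℕ} (hj : j < n) : (negOneRoot n j).re ≤ cos (π / n) := by
  have hn : (0 : ℝ) < n := by exact_mod_cast (j.zero_le.trans_lt hj)
  have hj' : (j : ℝ) + 1 ≤ n := by exact_mod_cast hj
  rw [negOneRoot, Complex.exp_ofReal_mul_I_re]
  apply cos_le_cos_of_le_of_le_two_pi_sub (by positivity)
  · rw [mul_div_assoc]
    exact le_mul_of_one_le_left (by positivity) (by linarith [j.cast_nonneg (α := ℝ)])
  · rw [div_le_iff₀ hn, sub_mul, div_mul_cancel₀ _ hn.ne']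
    nlinarith [mul_le_mul_of_nonneg_left hj' pi_pos.le]

theorem sum_negOneRoot_zpow {n : ℕ} {d : ℤ} (hd : |d| < n) :
    ∑ j ∈ range n, negOneRoot n j ^ d = if d = 0 then (n : ℂ) else 0 := by
  split_ifs with hd0
  · simp [hd0]
  have hn : n ≠ 0 := by rintro rfl; exact hd0 (abs_nonpos_iff.1 (by exact_mod_cast hd.le))
  set ρ := Complex.exp (2 * π * I / n)
  have hρ : IsPrimitiveRoot ρ n := Complex.isPrimitiveRoot_exp n hn
  have hρd : ρ ^ d ≠ 1 := fun h => hd0 (Int.eq_zero_of_abs_lt_dvd ((hρ.zpow_eq_one_iff_dvd d).1 h) hd)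
  have hterm : ∀ j, negOneRoot n j ^ d = Complex.exp (π * I / n) ^ d * (ρ ^ d) ^ j := by
    intro j
    rw [negOneRoot, ← Complex.exp_int_mul, ← Complex.exp_int_mul, ← Complex.exp_int_mul,
      ← Complex.exp_nat_mul, ← Complex.exp_add]
    congr 1
    push_cast
    ring
  have hρdn : (ρ ^ d) ^ n = 1 := by
    rw [← zpow_natCast, ← zpow_mul, mul_comm, zpow_mul, zpow_natCast, hρ.pow_eq_one, one_zpow]
  rw [sum_congr rfl fun j _ => hterm j, ← mul_sum, geom_sum_eq hρd, hρdn, sub_self, zero_div,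
    mul_zero]

noncomputable def twistedDFT (n : ℕ) (u : ℕ → ℂ) (j : ℕ) : ℂ :=
  ∑ k ∈ range n, u k * negOneRoot n j ^ (-(k : ℤ))

theorem sum_twistedDFT_mul_conj (n : ℕ) (u w : ℕ → ℂ) :
    ∑ j ∈ range n, twistedDFT n u j * conj (twistedDFT n w j) =
      n * ∑ k ∈ range n, u k * conj (w k) := by
  have hprod : ∀ j, twistedDFT n u j * conj (twistedDFT n w j) =
      ∑ k ∈ range n, ∑ m ∈ range n, u k * conj (w m) * negOneRoot n j ^ ((m : ℤ) - k) := by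
    intro j
    rw [twistedDFT, twistedDFT, map_sum, sum_mul_sum]
    refine sum_congr rfl fun k _ => sum_congr rfl fun m _ => ?_
    rw [map_mul, map_zpow₀, ← Complex.inv_eq_conj (norm_negOneRoot n j), inv_zpow', neg_neg,
      sub_eq_add_neg, zpow_add₀ (negOneRoot_ne_zero n j)]
    ring
  rw [sum_congr rfl fun j _ => hprod j, sum_comm, mul_sum]
  refine sum_congr rfl fun k hk => ?_
  rw [sum_comm]
  have horth : ∀ m ∈ range n, ∑ j ∈ range n, u k * conj (w m) * negOneRoot n j ^ ((m : ℤ) - k) =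
      if k = m then n * (u k * conj (w k)) else 0 := by
    intro m hm
    have hd : |(m : ℤ) - k| < n := by
      rw [abs_lt]; constructor <;> linarith [mem_range.1 hk, mem_range.1 hm]
    rw [← mul_sum, sum_negOneRoot_zpow hd]
    rcases eq_or_ne k m with rfl | hkm
    · simp [mul_comm]
    · simp [hkm, sub_eq_zero, Ne.symm hkm]
  rw [sum_congr rfl horth, sum_ite_eq, if_pos hk]

theorem twistedDFT_shift {n : ℕ} {u : ℕ → ℂ} (hu : u n = -u 0) (j : ℕ) :
    twistedDFT n (fun k => u (k + 1)) j = negOneRoot n j * twistedDFT n u j := by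
  rcases n.eq_zero_or_pos with rfl | hn
  · simp [twistedDFT]
  set ζ := negOneRoot n j
  have hζ : ζ ≠ 0 := negOneRoot_ne_zero n j
  have h := sum_range_succ' (fun k => u k * ζ ^ (1 - (k : ℤ))) n
  have hlast : u n * ζ ^ (1 - (n : ℤ)) = u 0 * ζ ^ (1 - ((0 : ℕ) : ℤ)) := by
    rw [hu, zpow_sub₀ hζ, zpow_natCast, negOneRoot_pow_self hn, Nat.cast_zero, sub_zero, zpow_one, div_neg, div_one]
    ring
  rw [sum_range_succ, hlast, add_left_inj] at h
  rw [twistedDFT, twistedDFT, mul_sum]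
  calc ∑ k ∈ range n, u (k + 1) * ζ ^ (-(k : ℤ))
      = ∑ k ∈ range n, u (k + 1) * ζ ^ (1 - ((k + 1 : ℕ) : ℤ)) := by
        push_cast
        ring_nf
    _ = ∑ k ∈ range n, u k * ζ ^ (1 - (k : ℤ)) := h.symm
    _ = ∑ k ∈ range n, ζ * (u k * ζ ^ (-(k : ℤ))) := sum_congr rfl fun k _ => by
        rw [sub_eq_add_neg, zpow_add₀ hζ, zpow_one]
        ring

theorem re_sum_succ_mul_conj_le {n : ℕ} (u : ℕ → ℂ) (hu : u n = -u 0) :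
    (∑ k ∈ range n, u (k + 1) * conj (u k)).re ≤ cos (π / n) * ∑ k ∈ range n, normSq (u k) := by
  rcases n.eq_zero_or_pos with rfl | hn
  · simp
  have hshift : (n : ℝ) * (∑ k ∈ range n, u (k + 1) * conj (u k)).re =
      ∑ j ∈ range n, (negOneRoot n j).re * normSq (twistedDFT n u j) := by
    have h := sum_twistedDFT_mul_conj n (fun k => u (k + 1)) u
    simp only [twistedDFT_shift hu, mul_assoc, Complex.mul_conj] at h
    have h' := congrArg Complex.re h
    rw [← Complex.ofReal_natCast, Complex.re_ofReal_mul, Complex.re_sum] at h'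
    simp only [Complex.re_mul_ofReal] at h'
    exact h'.symm
  have hparseval : ∑ j ∈ range n, normSq (twistedDFT n u j) = n * ∑ k ∈ range n, normSq (u k) := by
    have h := sum_twistedDFT_mul_conj n u u
    simp only [Complex.mul_conj] at h
    exact_mod_cast h
  refine le_of_mul_le_mul_left ?_ (Nat.cast_pos.2 hn : (0 : ℝ) < n)
  calc (n : ℝ) * (∑ k ∈ range n, u (k + 1) * conj (u k)).re
      = ∑ j ∈ range n, (negOneRoot n j).re * normSq (twistedDFT n u j) := hshift
    _ ≤ ∑ j ∈ range n, cos (π / n) * normSq (twistedDFT n u j) :=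
        sum_le_sum fun j hj =>
          mul_le_mul_of_nonneg_right (re_negOneRoot_le (mem_range.1 hj)) (Complex.normSq_nonneg _)
    _ = n * (cos (π / n) * ∑ k ∈ range n, normSq (u k)) := by
        rw [← mul_sum, hparseval]
        ring

theorem toth_inequality_general (n : ℕ) (x α : ℕ → ℝ)
    (hsum : ∑ i ∈ Finset.range n, α i = Real.pi) :
    ∑ i ∈ Finset.range n, x i * x ((i + 1) % n) * Real.cos (α i) ≤
      Real.cos (Real.pi / n) * ∑ i ∈ Finset.range n, (x i) ^ 2 := by
  set θ : ℕ → ℝ := fun k => ∑ i ∈ range k, α i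
  -- reading `x` modulo `n` makes `u n = x 0 * e^{iπ} = -u 0`
  set u : ℕ → ℂ := fun k => x (k % n) * Complex.exp (θ k * I)
  have hu : u n = -u 0 := by
    simp only [u, θ, Nat.mod_self, Nat.zero_mod, hsum, sum_range_zero, Complex.ofReal_zero,
      zero_mul, Complex.exp_zero, Complex.exp_pi_mul_I]
    ring
  have hterm : ∀ i ∈ range n,
      x i * x ((i + 1) % n) * cos (α i) = (u (i + 1) * conj (u i)).re := by
    intro i hi
    rw [re_ofReal_mul_exp_mul_conj, Nat.mod_eq_of_lt (mem_range.1 hi)]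
    simp only [θ, sum_range_succ, add_sub_cancel_left]
    ring
  have hsq : ∀ i ∈ range n, x i ^ 2 = normSq (u i) := by
    intro i hi
    rw [normSq_ofReal_mul_exp_ofReal_mul_I, Nat.mod_eq_of_lt (mem_range.1 hi)]
  rw [sum_congr rfl hterm, sum_congr rfl hsq, ← Complex.re_sum]
  exact re_sum_succ_mul_conj_le u hu

/-- **Tóth's inequality.** For `n ≥ 3`, positive reals `x₁,…,xₙ` and positive
`α₁,…,αₙ` with `∑ αᵢ = π`, and indices taken cyclically (`xₙ₊₁ = x₁`),
`∑ xᵢ xᵢ₊₁ cos αᵢ ≤ cos (π/n) · ∑ xᵢ²`. -/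
theorem toth_inequality (n : ℕ) (hn : 3 ≤ n) (x α : ℕ → ℝ)
    (hx : ∀ i ∈ Finset.range n, 0 < x i)
    (hα : ∀ i ∈ Finset.range n, 0 < α i)
    (hsum : ∑ i ∈ Finset.range n, α i = Real.pi) :
    ∑ i ∈ Finset.range n, x i * x ((i + 1) % n) * Real.cos (α i) ≤
      Real.cos (Real.pi / n) * ∑ i ∈ Finset.range n, (x i) ^ 2 :=
  toth_inequality_general n x α hsum
end

section
/- Let a₁, a₂, a₃, a₄, a₅ and α₁, α₂, α₃, α₄, α₅ be positive real numbers with α₁ + α₂ + α₃ + α₄ + α₅ = π and such that a₁ ≤ a₂ ≤ a₃ ≤ a₄ ≤ a₅. Then a₁ cos α₁ + a₂ cos α₂ + a₃ cos α₃ + a₄ cos α₄ + a₅ cos α₅ ≤ ((1+√5)/4) · (1/(a₁a₂a₃a₄a₅)) · (a₁²a₅²a₂² + a₅²a₂²a₃² + a₂²a₃²a₄² + a₃²a₄²a₁² + a₄²a₁²a₅²). -/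
/-!
The right-hand side is cyclic in the order `a₅, a₂, a₃, a₄, a₁`. Writing these as products
`xᵢ₋₁ xᵢ₊₁` of square roots turns the inequality into the pentagon case of
`∑ yₖ yₖ₊₁ cos γₖ ≤ cos (π / n) ∑ yₖ²` for angles summing to `π`, with the `yₖ` the `xᵢ` in
pentagram order. That case follows from three instances of `|y e^{iA} + x e^{-iB} - z|² ≥ 0`
(Wolstenholme's inequality): two merge the angles at `y₂` and at `y₅`, weighting the middle vertex
by `φ = 2 cos (π / 5)`, and the third closes the resulting triangle. The weights balance because
`φ² = φ + 1`.
-/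

open Real

theorem two_mul_mul_cos_add_mul_cos_le (x y z A B : ℝ) :
    2 * z * (y * cos A + x * cos B) ≤ x ^ 2 + y ^ 2 + z ^ 2 + 2 * x * y * cos (A + B) := by
  rw [cos_add]
  nlinarith [sq_nonneg (y * cos A + x * cos B - z), sq_nonneg (y * sin A - x * sin B),
    sin_sq_add_cos_sq A, sin_sq_add_cos_sq B]

theorem pentagon_sum_mul_cos_le (y₁ y₂ y₃ y₄ y₅ γ₁ γ₂ γ₃ γ₄ γ₅ : ℝ)
    (hγ : γ₁ + γ₂ + γ₃ + γ₄ + γ₅ = π) :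
    y₁ * y₂ * cos γ₁ + y₂ * y₃ * cos γ₂ + y₃ * y₄ * cos γ₃ + y₄ * y₅ * cos γ₄ +
        y₅ * y₁ * cos γ₅ ≤
      cos (π / 5) * (y₁ ^ 2 + y₂ ^ 2 + y₃ ^ 2 + y₄ ^ 2 + y₅ ^ 2) := by
  have hc_pos : 0 < cos (π / 5) := by rw [cos_pi_div_five]; positivity
  set c := cos (π / 5)
  have hc : 4 * c ^ 2 - 2 * c - 1 = 0 := quadratic_root_cos_pi_div_five
  have merge₂ := two_mul_mul_cos_add_mul_cos_le y₃ y₁ (2 * c * y₂) γ₁ γ₂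
  have merge₅ := two_mul_mul_cos_add_mul_cos_le y₁ y₄ (2 * c * y₅) γ₄ γ₅
  have triangle := two_mul_mul_cos_add_mul_cos_le (2 * c * y₄) (2 * c * y₃) y₁
    (γ₁ + γ₂) (γ₄ + γ₅)
  have hcos₃ : cos (γ₁ + γ₂ + (γ₄ + γ₅)) = -cos γ₃ := by
    rw [← cos_pi_sub]; congr 1; linarith
  rw [hcos₃] at triangle
  refine le_of_mul_le_mul_left ?_ (by positivity : 0 < 8 * c ^ 2)
  linear_combination 2 * c * merge₂ + 2 * c * merge₅ + triangle +
    (-(2 * c + 1) * y₁ ^ 2 - 2 * c * (y₃ ^ 2 + y₄ ^ 2)) * hc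

theorem sqrt_mul_sqrt_of_mul_eq_sq {p q b : ℝ} (hp : 0 ≤ p) (hb : 0 ≤ b) (h : p * q = b ^ 2) :
    √p * √q = b := by
  rw [← sqrt_mul hp, h, sqrt_sq hb]

theorem pentagon_sum_mul_cos_le_of_pos (b₁ b₂ b₃ b₄ b₅ β₁ β₂ β₃ β₄ β₅ : ℝ)
    (hb₁ : 0 < b₁) (hb₂ : 0 < b₂) (hb₃ : 0 < b₃) (hb₄ : 0 < b₄) (hb₅ : 0 < b₅)
    (hβ : β₁ + β₂ + β₃ + β₄ + β₅ = π) :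
    b₁ * cos β₁ + b₂ * cos β₂ + b₃ * cos β₃ + b₄ * cos β₄ + b₅ * cos β₅ ≤
      cos (π / 5) * (b₅ * b₁ * b₂ / (b₃ * b₄) + b₁ * b₂ * b₃ / (b₄ * b₅) +
        b₂ * b₃ * b₄ / (b₅ * b₁) + b₃ * b₄ * b₅ / (b₁ * b₂) + b₄ * b₅ * b₁ / (b₂ * b₃)) := by
  set t₁ := b₅ * b₁ * b₂ / (b₃ * b₄) with ht₁
  set t₂ := b₁ * b₂ * b₃ / (b₄ * b₅) with ht₂
  set t₃ := b₂ * b₃ * b₄ / (b₅ * b₁) with ht₃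
  set t₄ := b₃ * b₄ * b₅ / (b₁ * b₂) with ht₄
  set t₅ := b₄ * b₅ * b₁ / (b₂ * b₃) with ht₅
  have h₁₃ : √t₁ * √t₃ = b₂ :=
    sqrt_mul_sqrt_of_mul_eq_sq (by positivity) hb₂.le (by rw [ht₁, ht₃]; field_simp)
  have h₂₄ : √t₂ * √t₄ = b₃ :=
    sqrt_mul_sqrt_of_mul_eq_sq (by positivity) hb₃.le (by rw [ht₂, ht₄]; field_simp)
  have h₃₅ : √t₃ * √t₅ = b₄ :=
    sqrt_mul_sqrt_of_mul_eq_sq (by positivity) hb₄.le (by rw [ht₃, ht₅]; field_simp)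
  have h₄₁ : √t₄ * √t₁ = b₅ :=
    sqrt_mul_sqrt_of_mul_eq_sq (by positivity) hb₅.le (by rw [ht₄, ht₁]; field_simp)
  have h₅₂ : √t₅ * √t₂ = b₁ :=
    sqrt_mul_sqrt_of_mul_eq_sq (by positivity) hb₁.le (by rw [ht₅, ht₂]; field_simp)
  -- `bᵢ = √tᵢ₋₁ √tᵢ₊₁`, and these products are consecutive in the order `t₁, t₃, t₅, t₂, t₄`.
  have key := pentagon_sum_mul_cos_le (√t₁) (√t₃) (√t₅) (√t₂) (√t₄) β₂ β₄ β₁ β₃ β₅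
    (by linarith)
  rw [h₁₃, h₃₅, h₅₂, h₂₄, h₄₁] at key
  simp (disch := positivity) only [sq_sqrt] at key
  linarith

theorem pentagonal_inequality_strong_general
    (a₁ a₂ a₃ a₄ a₅ α₁ α₂ α₃ α₄ α₅ : ℝ)
    (ha₁ : 0 < a₁) (ha₂ : 0 < a₂) (ha₃ : 0 < a₃) (ha₄ : 0 < a₄) (ha₅ : 0 < a₅)
    (hsum : α₁ + α₂ + α₃ + α₄ + α₅ = Real.pi) :
    a₁ * Real.cos α₁ + a₂ * Real.cos α₂ + a₃ * Real.cos α₃ +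
        a₄ * Real.cos α₄ + a₅ * Real.cos α₅ ≤
      ((1 + Real.sqrt 5) / 4) * (1 / (a₁ * a₂ * a₃ * a₄ * a₅)) *
        (a₁ ^ 2 * a₅ ^ 2 * a₂ ^ 2 + a₅ ^ 2 * a₂ ^ 2 * a₃ ^ 2 +
          a₂ ^ 2 * a₃ ^ 2 * a₄ ^ 2 + a₃ ^ 2 * a₄ ^ 2 * a₁ ^ 2 +
          a₄ ^ 2 * a₁ ^ 2 * a₅ ^ 2) := by
  have h := pentagon_sum_mul_cos_le_of_pos a₅ a₂ a₃ a₄ a₁ α₅ α₂ α₃ α₄ α₁ ha₅ ha₂ ha₃ ha₄ ha₁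
    (by linarith)
  rw [cos_pi_div_five] at h
  convert h using 1
  · ring
  · field_simp

/-- **Pentagonal Inequality (strong form).** -/
theorem pentagonal_inequality_strong
    (a₁ a₂ a₃ a₄ a₅ α₁ α₂ α₃ α₄ α₅ : ℝ)
    (ha₁ : 0 < a₁) (ha₂ : 0 < a₂) (ha₃ : 0 < a₃) (ha₄ : 0 < a₄) (ha₅ : 0 < a₅)
    (hα₁ : 0 < α₁) (hα₂ : 0 < α₂) (hα₃ : 0 < α₃) (hα₄ : 0 < α₄) (hα₅ : 0 < α₅)
    (hsum : α₁ + α₂ + α₃ + α₄ + α₅ = Real.pi)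
    (h12 : a₁ ≤ a₂) (h23 : a₂ ≤ a₃) (h34 : a₃ ≤ a₄) (h45 : a₄ ≤ a₅) :
    a₁ * Real.cos α₁ + a₂ * Real.cos α₂ + a₃ * Real.cos α₃ +
        a₄ * Real.cos α₄ + a₅ * Real.cos α₅ ≤
      ((1 + Real.sqrt 5) / 4) * (1 / (a₁ * a₂ * a₃ * a₄ * a₅)) *
        (a₁ ^ 2 * a₅ ^ 2 * a₂ ^ 2 + a₅ ^ 2 * a₂ ^ 2 * a₃ ^ 2 +
          a₂ ^ 2 * a₃ ^ 2 * a₄ ^ 2 + a₃ ^ 2 * a₄ ^ 2 * a₁ ^ 2 +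
          a₄ ^ 2 * a₁ ^ 2 * a₅ ^ 2) :=
  pentagonal_inequality_strong_general a₁ a₂ a₃ a₄ a₅ α₁ α₂ α₃ α₄ α₅ ha₁ ha₂ ha₃ ha₄ ha₅ hsum
end

section
/- Let a₁, a₂, a₃, a₄, a₅ and α₁, α₂, α₃, α₄, α₅ be positive real numbers with α₁ + α₂ + α₃ + α₄ + α₅ = π. Then a₁ cos α₁ + a₂ cos α₂ + a₃ cos α₃ + a₄ cos α₄ + a₅ cos α₅ ≤ ((1+√5)/4) · (1/(a₁a₂a₃a₄a₅)) · (a₁²a₂²a₃² + a₂²a₃²a₄² + a₃²a₄²a₅² + a₄²a₅²a₁² + a₅²a₁²a₂²). -/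
/-!
Substituting `zₖ` for the products of three consecutive `aᵢ` turns the claim into the bound
`∑ zₖ zₖ₊₁ cos θₖ ≤ cos (π/5) ∑ zₖ²` for angles `θₖ` summing to `π`. Placing the vectors
`zₖ (cos φₖ, sin φₖ)` in the plane, with `φₖ` the partial sums of the angles, the left side becomes
a sum of inner products of consecutive vectors in which the closing term enters with a minus sign,
because the angles add up to `π`. Coordinatewise this is the quadratic form of the signed
5-cycle, whose largest eigenvalue is `cos (π/5) = (1 + √5)/4`.
-/

open Real

/-- The sum-of-squares certificate comes from diagonalising the signed 5-cycle, whose eigenvalues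
are `cos ((2k+1)π/5)`. -/
theorem signed_cycle_form_le (x₁ x₂ x₃ x₄ x₅ : ℝ) :
    x₁ * x₂ + x₂ * x₃ + x₃ * x₄ + x₄ * x₅ - x₅ * x₁ ≤
      (1 + √5) / 4 * (x₁ ^ 2 + x₂ ^ 2 + x₃ ^ 2 + x₄ ^ 2 + x₅ ^ 2) := by
  have h5 : √5 ^ 2 = 5 := sq_sqrt (by norm_num)
  have h1 : 1 ≤ √5 := by nlinarith [sqrt_nonneg 5]
  have sq₁ : 0 ≤ (1 + √5) * (2 * x₁ + (1 - √5) * x₂ + (√5 - 1) * x₅) ^ 2 := by positivity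
  have sq₂ : 0 ≤ (2 * x₂ - 2 * x₃ + (√5 - 1) * x₅) ^ 2 := sq_nonneg _
  have sq₃ : 0 ≤ (√5 - 1) * (2 * x₃ - (1 + √5) * x₄ + 2 * x₅) ^ 2 :=
    mul_nonneg (by linarith) (sq_nonneg _)
  linear_combination (sq₁ + 2 * sq₂ + sq₃ - (-x₅ ^ 2 + 4 * x₄ * x₅ - x₄ ^ 2 + 4 * x₃ * x₄
    - 2 * x₂ * x₅ + x₂ ^ 2 - 4 * x₁ * x₅ + 4 * x₁ * x₂
    + √5 * (-x₅ ^ 2 - x₄ ^ 2 + 2 * x₂ * x₅ - x₂ ^ 2)) * h5) / 16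

theorem cyclic_cos_form_le (z₁ z₂ z₃ z₄ z₅ θ₁ θ₂ θ₃ θ₄ θ₅ : ℝ)
    (hθ : θ₁ + θ₂ + θ₃ + θ₄ + θ₅ = π) :
    z₁ * z₂ * cos θ₁ + z₂ * z₃ * cos θ₂ + z₃ * z₄ * cos θ₃ + z₄ * z₅ * cos θ₄ +
        z₅ * z₁ * cos θ₅ ≤
      (1 + √5) / 4 * (z₁ ^ 2 + z₂ ^ 2 + z₃ ^ 2 + z₄ ^ 2 + z₅ ^ 2) := by
  obtain ⟨φ₂, rfl⟩ : ∃ φ₂, θ₂ = φ₂ - θ₁ := ⟨θ₁ + θ₂, by ring⟩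
  obtain ⟨φ₃, rfl⟩ : ∃ φ₃, θ₃ = φ₃ - φ₂ := ⟨φ₂ + θ₃, by ring⟩
  obtain ⟨φ₄, rfl⟩ : ∃ φ₄, θ₄ = φ₄ - φ₃ := ⟨φ₃ + θ₄, by ring⟩
  obtain rfl : θ₅ = π - φ₄ := by linarith
  have hcos := signed_cycle_form_le z₁ (z₂ * cos θ₁) (z₃ * cos φ₂) (z₄ * cos φ₃) (z₅ * cos φ₄)
  have hsin := signed_cycle_form_le 0 (z₂ * sin θ₁) (z₃ * sin φ₂) (z₄ * sin φ₃) (z₅ * sin φ₄)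
  rw [cos_pi_sub, cos_sub, cos_sub, cos_sub]
  linear_combination hcos + hsin + (1 + √5) / 4 * (z₂ ^ 2 * sin_sq_add_cos_sq θ₁ +
    z₃ ^ 2 * sin_sq_add_cos_sq φ₂ + z₄ ^ 2 * sin_sq_add_cos_sq φ₃ + z₅ ^ 2 * sin_sq_add_cos_sq φ₄)

theorem pentagonal_inequality_normal_general
    (a₁ a₂ a₃ a₄ a₅ α₁ α₂ α₃ α₄ α₅ : ℝ)
    (ha₁ : 0 < a₁) (ha₂ : 0 < a₂) (ha₃ : 0 < a₃) (ha₄ : 0 < a₄) (ha₅ : 0 < a₅)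
    (hsum : α₁ + α₂ + α₃ + α₄ + α₅ = Real.pi) :
    a₁ * Real.cos α₁ + a₂ * Real.cos α₂ + a₃ * Real.cos α₃ +
        a₄ * Real.cos α₄ + a₅ * Real.cos α₅ ≤
      ((1 + Real.sqrt 5) / 4) * (1 / (a₁ * a₂ * a₃ * a₄ * a₅)) *
        (a₁ ^ 2 * a₂ ^ 2 * a₃ ^ 2 + a₂ ^ 2 * a₃ ^ 2 * a₄ ^ 2 +
          a₃ ^ 2 * a₄ ^ 2 * a₅ ^ 2 + a₄ ^ 2 * a₅ ^ 2 * a₁ ^ 2 +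
          a₅ ^ 2 * a₁ ^ 2 * a₂ ^ 2) := by
  have hP : 0 < a₁ * a₂ * a₃ * a₄ * a₅ := by positivity
  -- consecutive triples multiply to `aₖ * (a₁ * a₂ * a₃ * a₄ * a₅)`, with `aₖ` their shared factor
  have key := cyclic_cos_form_le (a₁ * a₂ * a₃) (a₃ * a₄ * a₅) (a₅ * a₁ * a₂) (a₂ * a₃ * a₄)
    (a₄ * a₅ * a₁) α₃ α₅ α₂ α₄ α₁ (by linarith)
  rw [mul_one_div, div_mul_eq_mul_div, le_div_iff₀ hP]
  linear_combination key

/-- **Pentagonal Inequality (normal form).** -/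
theorem pentagonal_inequality_normal
    (a₁ a₂ a₃ a₄ a₅ α₁ α₂ α₃ α₄ α₅ : ℝ)
    (ha₁ : 0 < a₁) (ha₂ : 0 < a₂) (ha₃ : 0 < a₃) (ha₄ : 0 < a₄) (ha₅ : 0 < a₅)
    (hα₁ : 0 < α₁) (hα₂ : 0 < α₂) (hα₃ : 0 < α₃) (hα₄ : 0 < α₄) (hα₅ : 0 < α₅)
    (hsum : α₁ + α₂ + α₃ + α₄ + α₅ = Real.pi) :
    a₁ * Real.cos α₁ + a₂ * Real.cos α₂ + a₃ * Real.cos α₃ +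
        a₄ * Real.cos α₄ + a₅ * Real.cos α₅ ≤
      ((1 + Real.sqrt 5) / 4) * (1 / (a₁ * a₂ * a₃ * a₄ * a₅)) *
        (a₁ ^ 2 * a₂ ^ 2 * a₃ ^ 2 + a₂ ^ 2 * a₃ ^ 2 * a₄ ^ 2 +
          a₃ ^ 2 * a₄ ^ 2 * a₅ ^ 2 + a₄ ^ 2 * a₅ ^ 2 * a₁ ^ 2 +
          a₅ ^ 2 * a₁ ^ 2 * a₂ ^ 2) :=
  pentagonal_inequality_normal_general a₁ a₂ a₃ a₄ a₅ α₁ α₂ α₃ α₄ α₅ ha₁ ha₂ ha₃ ha₄ ha₅ hsum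
end

section
/- Let a₁ ≤ a₂ ≤ a₃ ≤ a₄ ≤ a₅ be positive real numbers. Then for every permutation σ of {1,2,3,4,5}, one has φ(a₁, a₅, a₂, a₃, a₄) ≤ φ(a_{σ(1)}, a_{σ(2)}, a_{σ(3)}, a_{σ(4)}, a_{σ(5)}). In other words, the circular arrangement (a₁, a₅, a₂, a₃, a₄) minimizes φ over all arrangements of a₁, ..., a₅. -/
/-- `φ(x₁, x₂, x₃, x₄, x₅) = x₁x₂x₃ + x₂x₃x₄ + x₃x₄x₅ + x₄x₅x₁ + x₅x₁x₂`. -/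
def phi (x₁ x₂ x₃ x₄ x₅ : ℝ) : ℝ :=
  x₁ * x₂ * x₃ + x₂ * x₃ * x₄ + x₃ * x₄ * x₅ + x₄ * x₅ * x₁ + x₅ * x₁ * x₂

/-!
Exchanging two neighbours `xᵢ, xᵢ₊₁` of a cyclic arrangement changes `φ` by
`xᵢ₊₃ (xᵢ₊₁ - xᵢ) (xᵢ₊₂ - xᵢ₋₁)`. When the arrangement lists the values of an increasing
nonnegative `a`, the sign of this change can be read off the indices alone. A finite check shows
that every arrangement of the indices that is not a rotation or reflection of `(1, 5, 2, 3, 4)`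
admits an exchange which does not increase `φ` for any such `a`; descending along these
exchanges ends at the claimed minimizer.
-/

def cyclicTripleSum {R : Type*} [CommSemiring R] (x : Fin 5 → R) : R :=
  ∑ j, x j * x (j + 1) * x (j + 2)

lemma cyclicTripleSum_eq_phi (x : Fin 5 → ℝ) :
    cyclicTripleSum x = phi (x 0) (x 1) (x 2) (x 3) (x 4) := by
  simp only [cyclicTripleSum, phi, Fin.sum_univ_five, Fin.reduceAdd, Fin.isValue]

def IsDihedralImage {β : Type*} (f g : Fin 5 → β) : Prop :=
  ∃ k, (∀ j, f (j + k) = g j) ∨ ∀ j, f (k - j) = g j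

instance {β : Type*} [DecidableEq β] (f g : Fin 5 → β) : Decidable (IsDihedralImage f g) := by
  unfold IsDihedralImage; infer_instance

section CommSemiring

variable {R : Type*} [CommSemiring R]

lemma cyclicTripleSum_comp_addRight (x : Fin 5 → R) (k : Fin 5) :
    cyclicTripleSum (fun j ↦ x (j + k)) = cyclicTripleSum x := by
  refine Fintype.sum_equiv (Equiv.addRight k) _ _ fun j ↦ ?_
  simp only [Equiv.coe_addRight, add_right_comm _ k]

lemma cyclicTripleSum_comp_subLeft (x : Fin 5 → R) (k : Fin 5) :
    cyclicTripleSum (fun j ↦ x (k - j)) = cyclicTripleSum x := by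
  refine Fintype.sum_equiv (Equiv.subLeft (k - 2)) _ _ fun j ↦ ?_
  rw [Equiv.subLeft_apply, show k - 2 - j + 1 = k - (j + 1) by grind,
    show k - 2 - j + 2 = k - j by grind, show k - 2 - j = k - (j + 2) by grind]
  ring

lemma IsDihedralImage.cyclicTripleSum_comp_eq {β : Type*} {f g : Fin 5 → β}
    (h : IsDihedralImage f g) (a : β → R) : cyclicTripleSum (a ∘ f) = cyclicTripleSum (a ∘ g) := by
  obtain ⟨k, hk | hk⟩ := h
  · simpa only [Function.comp_def, hk] using (cyclicTripleSum_comp_addRight (a ∘ f) k).symm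
  · simpa only [Function.comp_def, hk] using (cyclicTripleSum_comp_subLeft (a ∘ f) k).symm

end CommSemiring

lemma cyclicTripleSum_sub_cyclicTripleSum_comp_swap {R : Type*} [CommRing R] (x : Fin 5 → R)
    (i : Fin 5) :
    cyclicTripleSum x - cyclicTripleSum (x ∘ Equiv.swap i (i + 1)) =
      x (i + 3) * ((x (i + 1) - x i) * (x (i + 2) - x (i - 1))) := by
  fin_cases i <;>
    simp only [cyclicTripleSum, Fin.sum_univ_five, Function.comp_apply, Equiv.swap_apply_def,
      Fin.reduceAdd, Fin.reduceSub, Fin.isValue, Fin.mk_zero, Fin.mk_one, Fin.reduceFinMk,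
      Fin.reduceEq, if_true, if_false] <;>
    ring

section OrderedRing

variable {α R : Type*} [LinearOrder α] [CommRing R] [LinearOrder R] [IsStrictOrderedRing R]
  {a : α → R}

lemma Monotone.mul_sub_nonneg_of_lt_iff_lt (ha : Monotone a) {p q r s : α}
    (h : p < q ↔ r < s) : 0 ≤ (a q - a p) * (a s - a r) := by
  by_cases hpq : p < q
  · exact mul_nonneg (sub_nonneg.2 (ha hpq.le)) (sub_nonneg.2 (ha (h.1 hpq).le))
  · have hsr : s ≤ r := not_lt.1 (mt h.2 hpq)
    exact mul_nonneg_of_nonpos_of_nonpos (sub_nonpos.2 (ha (not_lt.1 hpq))) (sub_nonpos.2 (ha hsr))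

lemma cyclicTripleSum_comp_swap_le (ha : Monotone a) (ha₀ : ∀ i, 0 ≤ a i) (σ : Fin 5 → α)
    {i : Fin 5} (h : σ i < σ (i + 1) ↔ σ (i - 1) < σ (i + 2)) :
    cyclicTripleSum (a ∘ σ ∘ Equiv.swap i (i + 1)) ≤ cyclicTripleSum (a ∘ σ) := by
  rw [← sub_nonneg, ← Function.comp_assoc, cyclicTripleSum_sub_cyclicTripleSum_comp_swap]
  exact mul_nonneg (ha₀ _) (ha.mul_sub_nonneg_of_lt_iff_lt h)

end OrderedRing

def minimizingArrangement : Fin 5 → Fin 5 := ![0, 4, 1, 2, 3]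

/-- The strict decrease of `cyclicTripleSum` at the values `1, …, 5` makes the descent
terminate. -/
theorem isDihedralImage_minimizingArrangement_or_exists_exchange (σ : Equiv.Perm (Fin 5)) :
    IsDihedralImage σ minimizingArrangement ∨
      ∃ i, (σ i < σ (i + 1) ↔ σ (i - 1) < σ (i + 2)) ∧
        cyclicTripleSum (fun j ↦ ((σ * Equiv.swap i (i + 1)) j : ℕ) + 1) <
          cyclicTripleSum (fun j ↦ (σ j : ℕ) + 1) := by
  revert σ
  decide +kernel

theorem cyclicTripleSum_comp_minimizingArrangement_le {R : Type*} [CommRing R] [LinearOrder R]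
    [IsStrictOrderedRing R] {a : Fin 5 → R} (ha : Monotone a) (ha₀ : ∀ i, 0 ≤ a i)
    (σ : Equiv.Perm (Fin 5)) :
    cyclicTripleSum (a ∘ minimizingArrangement) ≤ cyclicTripleSum (a ∘ σ) := by
  induction h : cyclicTripleSum (fun j ↦ (σ j : ℕ) + 1) using Nat.strong_induction_on
    generalizing σ with
  | _ n ih =>
  obtain hσ | ⟨i, hi, hlt⟩ := isDihedralImage_minimizingArrangement_or_exists_exchange σ
  · exact (hσ.cyclicTripleSum_comp_eq a).ge
  · calc cyclicTripleSum (a ∘ minimizingArrangement)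
        ≤ cyclicTripleSum (a ∘ ⇑(σ * Equiv.swap i (i + 1))) := ih _ (h ▸ hlt) _ rfl
      _ ≤ cyclicTripleSum (a ∘ σ) := cyclicTripleSum_comp_swap_le ha ha₀ σ hi

/-- The arrangement `(a₁, a₅, a₂, a₃, a₄)` minimizes `φ` over all
arrangements of positive reals `a₁ ≤ a₂ ≤ a₃ ≤ a₄ ≤ a₅`. -/
theorem phi_min_arrangement (a : Fin 5 → ℝ)
    (hpos : ∀ i, 0 < a i)
    (h01 : a 0 ≤ a 1) (h12 : a 1 ≤ a 2) (h23 : a 2 ≤ a 3) (h34 : a 3 ≤ a 4)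
    (σ : Equiv.Perm (Fin 5)) :
    phi (a 0) (a 4) (a 1) (a 2) (a 3) ≤
      phi (a (σ 0)) (a (σ 1)) (a (σ 2)) (a (σ 3)) (a (σ 4)) := by
  have ha : Monotone a := Fin.monotone_iff_le_succ.2 fun i ↦ by
    fin_cases i
    exacts [h01, h12, h23, h34]
  have h := cyclicTripleSum_comp_minimizingArrangement_le ha (fun i ↦ (hpos i).le) σ
  rwa [cyclicTripleSum_eq_phi, cyclicTripleSum_eq_phi] at h
end

section
/- Let a₁, a₂, a₃, a₄, a₅ and α₁, α₂, α₃, α₄, α₅ be positive real numbers with α₁ + α₂ + α₃ + α₄ + α₅ = π, and let (b₁, b₂, b₃, b₄, b₅) be any circular permutation of (a₁, a₂, a₃, a₄, a₅) with b₁ = a₁. Then ∑_{i=1}^5 bᵢ cos αᵢ ≤ ((1+√5)/4) · (1/(b₁b₂b₃b₄b₅)) · φ(b₁², b₂², b₃², b₄², b₅²). -/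
open Real

/-- The 5-cycle with one negative edge has largest adjacency eigenvalue `2 cos (π/5) = (1 + √5)/2`. -/
theorem signed_cycle_form_le_s4 (y₁ y₂ y₃ y₄ y₅ : ℝ) :
    y₁ * y₂ + y₂ * y₃ + y₃ * y₄ + y₄ * y₅ - y₅ * y₁ ≤
      (1 + √5) / 4 * (y₁ ^ 2 + y₂ ^ 2 + y₃ ^ 2 + y₄ ^ 2 + y₅ ^ 2) := by
  have hs : √5 ^ 2 = 5 := sq_sqrt (by norm_num)
  have hs1 : 1 ≤ √5 := by nlinarith [sqrt_nonneg 5]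
  have h₁ : 0 ≤ (1 + √5) * (2 * y₁ + (1 - √5) * y₂ + (√5 - 1) * y₅) ^ 2 := by positivity
  have h₂ := sq_nonneg (2 * y₂ - 2 * y₃ + (√5 - 1) * y₅)
  have h₃ : 0 ≤ (√5 - 1) * (2 * y₃ - (1 + √5) * y₄ + 2 * y₅) ^ 2 :=
    mul_nonneg (by linarith) (sq_nonneg _)
  have sos : 4 * (1 + √5) * (y₁ ^ 2 + y₂ ^ 2 + y₃ ^ 2 + y₄ ^ 2 + y₅ ^ 2)
      - 16 * (y₁ * y₂ + y₂ * y₃ + y₃ * y₄ + y₄ * y₅ - y₅ * y₁)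
      = (1 + √5) * (2 * y₁ + (1 - √5) * y₂ + (√5 - 1) * y₅) ^ 2
        + 2 * (2 * y₂ - 2 * y₃ + (√5 - 1) * y₅) ^ 2
        + (√5 - 1) * (2 * y₃ - (1 + √5) * y₄ + 2 * y₅) ^ 2 := by
    linear_combination (-y₅ ^ 2 + 4 * y₄ * y₅ - y₄ ^ 2 + 4 * y₃ * y₄ - 2 * y₂ * y₅ + y₂ ^ 2
      - 4 * y₁ * y₅ + 4 * y₁ * y₂ + √5 * (-y₅ ^ 2 - y₄ ^ 2 + 2 * y₂ * y₅ - y₂ ^ 2)) * hs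
  linarith

theorem signed_cycle_form_le_of_plane (x₁ x₂ x₃ x₄ x₅ y₁ y₂ y₃ y₄ y₅ : ℝ) :
    (x₁ * x₂ + y₁ * y₂) + (x₂ * x₃ + y₂ * y₃) + (x₃ * x₄ + y₃ * y₄) + (x₄ * x₅ + y₄ * y₅)
        - (x₅ * x₁ + y₅ * y₁) ≤
      (1 + √5) / 4 * ((x₁ ^ 2 + y₁ ^ 2) + (x₂ ^ 2 + y₂ ^ 2) + (x₃ ^ 2 + y₃ ^ 2)
        + (x₄ ^ 2 + y₄ ^ 2) + (x₅ ^ 2 + y₅ ^ 2)) := by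
  linarith [signed_cycle_form_le_s4 x₁ x₂ x₃ x₄ x₅, signed_cycle_form_le_s4 y₁ y₂ y₃ y₄ y₅]

theorem polar_dot_eq (r s θ ψ : ℝ) :
    r * cos θ * (s * cos ψ) + r * sin θ * (s * sin ψ) = r * s * cos (ψ - θ) := by
  rw [cos_sub]; ring

theorem polar_norm_sq_eq (r θ : ℝ) : (r * cos θ) ^ 2 + (r * sin θ) ^ 2 = r ^ 2 := by
  linear_combination r ^ 2 * cos_sq_add_sin_sq θ

/-- Turning angles `βᵢ` summing to `π` close up the signed cycle: placing `nᵢ` in the plane at the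
partial sums of the `βᵢ`, the negative edge `n₅n₁` subtends `π - β₅`. -/
theorem cyclic_cos_form_le_s4 (n₁ n₂ n₃ n₄ n₅ β₁ β₂ β₃ β₄ β₅ : ℝ)
    (hβ : β₁ + β₂ + β₃ + β₄ + β₅ = π) :
    n₁ * n₂ * cos β₁ + n₂ * n₃ * cos β₂ + n₃ * n₄ * cos β₃ + n₄ * n₅ * cos β₄
        + n₅ * n₁ * cos β₅ ≤
      (1 + √5) / 4 * (n₁ ^ 2 + n₂ ^ 2 + n₃ ^ 2 + n₄ ^ 2 + n₅ ^ 2) := by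
  have key := signed_cycle_form_le_of_plane
    (n₁ * cos 0) (n₂ * cos β₁) (n₃ * cos (β₁ + β₂)) (n₄ * cos (β₁ + β₂ + β₃))
    (n₅ * cos (β₁ + β₂ + β₃ + β₄))
    (n₁ * sin 0) (n₂ * sin β₁) (n₃ * sin (β₁ + β₂)) (n₄ * sin (β₁ + β₂ + β₃))
    (n₅ * sin (β₁ + β₂ + β₃ + β₄))
  simp only [polar_dot_eq, polar_norm_sq_eq] at key
  have hβ₅ : (0 : ℝ) - (β₁ + β₂ + β₃ + β₄) = β₅ - π := by linarith
  rw [hβ₅, cos_sub_pi] at key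
  convert key using 3; ring_nf

/-- The pentagram triple products `b₁b₂b₃, b₃b₄b₅, b₅b₁b₂, b₂b₃b₄, b₄b₅b₁` have consecutive
products `P·b₃, P·b₅, P·b₂, P·b₄, P·b₁` with `P = b₁⋯b₅`, and squares summing to `φ(b₁², …, b₅²)`. -/
theorem prod_mul_sum_mul_cos_le_phi (b₁ b₂ b₃ b₄ b₅ α₁ α₂ α₃ α₄ α₅ : ℝ)
    (hα : α₁ + α₂ + α₃ + α₄ + α₅ = π) :
    b₁ * b₂ * b₃ * b₄ * b₅ *
        (b₁ * cos α₁ + b₂ * cos α₂ + b₃ * cos α₃ + b₄ * cos α₄ + b₅ * cos α₅) ≤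
      (1 + √5) / 4 * phi (b₁ ^ 2) (b₂ ^ 2) (b₃ ^ 2) (b₄ ^ 2) (b₅ ^ 2) := by
  have key := cyclic_cos_form_le_s4 (b₁ * b₂ * b₃) (b₃ * b₄ * b₅) (b₅ * b₁ * b₂) (b₂ * b₃ * b₄)
    (b₄ * b₅ * b₁) α₃ α₅ α₂ α₄ α₁ (by linarith)
  unfold phi
  linarith

theorem pentagonal_circular_perm_general
    (a₁ a₂ a₃ a₄ a₅ α₁ α₂ α₃ α₄ α₅ b₁ b₂ b₃ b₄ b₅ : ℝ)
    (ha₁ : 0 < a₁) (ha₂ : 0 < a₂) (ha₃ : 0 < a₃) (ha₄ : 0 < a₄) (ha₅ : 0 < a₅)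
    (hsum : α₁ + α₂ + α₃ + α₄ + α₅ = Real.pi)
    (hb₁ : b₁ = a₁)
    (hperm : List.Perm [b₂, b₃, b₄, b₅] [a₂, a₃, a₄, a₅]) :
    b₁ * Real.cos α₁ + b₂ * Real.cos α₂ + b₃ * Real.cos α₃ +
        b₄ * Real.cos α₄ + b₅ * Real.cos α₅ ≤
      ((1 + Real.sqrt 5) / 4) * (1 / (b₁ * b₂ * b₃ * b₄ * b₅)) *
        phi (b₁ ^ 2) (b₂ ^ 2) (b₃ ^ 2) (b₄ ^ 2) (b₅ ^ 2) := by
  have ha : ∀ x ∈ [a₂, a₃, a₄, a₅], 0 < x := by simp [*]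
  have hb : ∀ x ∈ [b₂, b₃, b₄, b₅], 0 < x := fun x hx ↦ ha x (hperm.subset hx)
  simp only [List.mem_cons, List.not_mem_nil, forall_eq_or_imp] at hb
  obtain ⟨hb₂, hb₃, hb₄, hb₅, -⟩ := hb
  have hP : 0 < b₁ * b₂ * b₃ * b₄ * b₅ := by subst hb₁; positivity
  rw [mul_one_div, div_mul_eq_mul_div, le_div_iff₀ hP, mul_comm]
  exact prod_mul_sum_mul_cos_le_phi b₁ b₂ b₃ b₄ b₅ α₁ α₂ α₃ α₄ α₅ hsum

/-- **Lemma 2.** For any circular permutation `(b₁, …, b₅)` of `(a₁, …, a₅)`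
with `b₁ = a₁`, i.e. `(b₂, b₃, b₄, b₅)` is a permutation of `(a₂, a₃, a₄, a₅)`,
we have `∑ bᵢ cos αᵢ ≤ ((1+√5)/4) · (1/(b₁b₂b₃b₄b₅)) · φ(b₁², b₂², b₃², b₄², b₅²)`. -/
theorem pentagonal_circular_perm
    (a₁ a₂ a₃ a₄ a₅ α₁ α₂ α₃ α₄ α₅ b₁ b₂ b₃ b₄ b₅ : ℝ)
    (ha₁ : 0 < a₁) (ha₂ : 0 < a₂) (ha₃ : 0 < a₃) (ha₄ : 0 < a₄) (ha₅ : 0 < a₅)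
    (hα₁ : 0 < α₁) (hα₂ : 0 < α₂) (hα₃ : 0 < α₃) (hα₄ : 0 < α₄) (hα₅ : 0 < α₅)
    (hsum : α₁ + α₂ + α₃ + α₄ + α₅ = Real.pi)
    (hb₁ : b₁ = a₁)
    (hperm : List.Perm [b₂, b₃, b₄, b₅] [a₂, a₃, a₄, a₅]) :
    b₁ * Real.cos α₁ + b₂ * Real.cos α₂ + b₃ * Real.cos α₃ +
        b₄ * Real.cos α₄ + b₅ * Real.cos α₅ ≤
      ((1 + Real.sqrt 5) / 4) * (1 / (b₁ * b₂ * b₃ * b₄ * b₅)) *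
        phi (b₁ ^ 2) (b₂ ^ 2) (b₃ ^ 2) (b₄ ^ 2) (b₅ ^ 2) :=
  pentagonal_circular_perm_general a₁ a₂ a₃ a₄ a₅ α₁ α₂ α₃ α₄ α₅ b₁ b₂ b₃ b₄ b₅ ha₁ ha₂ ha₃ ha₄ ha₅
    hsum hb₁ hperm
end

section
/- Let a₁, a₂, ..., a₇ and α₁, α₂, ..., α₇ be positive real numbers with α₁ + α₂ + ... + α₇ = π. Then ∑_{i=1}^7 aᵢ cos αᵢ ≤ cos(π/7) · (1/(a₁a₂a₃a₄a₅a₆a₇)) · ψ(a₁², a₂², a₃², a₄², a₅², a₆², a₇²). -/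
/-!
Writing the `aᵢ`, taken in the order `a₁, a₄, a₇, a₃, a₆, a₂, a₅`, as products `yₖyₖ₊₁` of
neighbours on a 7-cycle (possible because the cycle is odd) turns the right-hand side into
`cos (π/7) ∑ yₖ²`. With `θₖ` the partial sums of the correspondingly reordered angles, the
left-hand side is `∑ Re (zₖ z̄ₖ₊₁)` for `zₖ = yₖ e^{iθₖ}`, except that `θ₈ = θ₁ + π` flips the sign
of the closing edge. So it is the Hermitian form of the 7-cycle with one negative edge, whose
largest eigenvalue is `cos (π/7)`; for real vectors this is a sum-of-squares identity that
uses only the relation `8c³ - 4c² - 4c + 1 = 0` for `c = cos (π/7)`.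
-/

open Real

/-- `ψ(x₁,…,x₇) = x₁x₂x₃x₄ + x₂x₃x₄x₅ + x₃x₄x₅x₆ + x₄x₅x₆x₇ + x₅x₆x₇x₁ + x₆x₇x₁x₂ + x₇x₁x₂x₃`. -/
def psi (x₁ x₂ x₃ x₄ x₅ x₆ x₇ : ℝ) : ℝ :=
  x₁ * x₂ * x₃ * x₄ + x₂ * x₃ * x₄ * x₅ + x₃ * x₄ * x₅ * x₆ + x₄ * x₅ * x₆ * x₇ +
    x₅ * x₆ * x₇ * x₁ + x₆ * x₇ * x₁ * x₂ + x₇ * x₁ * x₂ * x₃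

lemma cos_pi_div_seven_cubic :
    8 * cos (π / 7) ^ 3 - 4 * cos (π / 7) ^ 2 - 4 * cos (π / 7) + 1 = 0 := by
  set c := cos (π / 7)
  have h_pos : 0 < c := cos_pos_of_mem_Ioo ⟨by linarith [pi_pos], by linarith [pi_pos]⟩
  have h_four_eq : cos (2 * (2 * (π / 7))) = -cos (3 * (π / 7)) := by
    rw [← cos_pi_sub]; ring_nf
  rw [cos_two_mul, cos_two_mul, cos_three_mul] at h_four_eq
  have h_factor : (c + 1) * (8 * c ^ 3 - 4 * c ^ 2 - 4 * c + 1) = 0 := by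
    linear_combination h_four_eq
  exact (mul_eq_zero.mp h_factor).resolve_left (by positivity)

lemma three_quarters_lt_cos_pi_div_seven : 3 / 4 < cos (π / 7) := by
  have h := cos_lt_cos_of_nonneg_of_le_pi (x := π / 7) (y := π / 6)
    (by positivity) (by linarith [pi_pos]) (by linarith [pi_pos])
  rw [cos_pi_div_six] at h
  nlinarith [sq_sqrt (show (0 : ℝ) ≤ 3 by norm_num), sqrt_nonneg 3]

lemma cos_pi_div_seven_lt_one : cos (π / 7) < 1 := by
  simpa using
    cos_lt_cos_of_nonneg_of_le_pi le_rfl (by linarith [pi_pos]) (div_pos pi_pos (by norm_num))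

lemma twisted_cycle_form_le (w₁ w₂ w₃ w₄ w₅ w₆ w₇ : ℝ) :
    w₁ * w₂ + w₂ * w₃ + w₃ * w₄ + w₄ * w₅ + w₅ * w₆ + w₆ * w₇ - w₇ * w₁ ≤
      cos (π / 7) * (w₁ ^ 2 + w₂ ^ 2 + w₃ ^ 2 + w₄ ^ 2 + w₅ ^ 2 + w₆ ^ 2 + w₇ ^ 2) := by
  have h_cubic := cos_pi_div_seven_cubic
  have h_lower := three_quarters_lt_cos_pi_div_seven
  have h_upper := cos_pi_div_seven_lt_one
  set c := cos (π / 7)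
  -- An LDLᵀ factorisation of `c I - A`; its last pivot vanishes since `c` is a root of the cubic.
  have h_sos : c * (w₁ ^ 2 + w₂ ^ 2 + w₃ ^ 2 + w₄ ^ 2 + w₅ ^ 2 + w₆ ^ 2 + w₇ ^ 2) -
      (w₁ * w₂ + w₂ * w₃ + w₃ * w₄ + w₄ * w₅ + w₅ * w₆ + w₆ * w₇ - w₇ * w₁) =
      c * (w₁ + (4 * c ^ 2 - 2 * c - 2) * w₂ + (2 + 2 * c - 4 * c ^ 2) * w₇) ^ 2 +
      (2 * c ^ 2 - 1) * (w₂ + (1 - 2 * c) * w₃ + (4 * c ^ 2 - 2 * c - 1) * w₇) ^ 2 +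
      1 / 2 * (w₃ - w₄ + (4 * c ^ 2 - 2 * c - 1) * w₇) ^ 2 +
      (c - 1 / 2) * (w₄ + (2 - 4 * c ^ 2) * w₅ + (2 + 2 * c - 4 * c ^ 2) * w₇) ^ 2 +
      (1 + c - 2 * c ^ 2) * (w₅ - 2 * c * w₆ + w₇) ^ 2 := by
    linear_combination (3/2 * w₇^2 - w₆ * w₇ + 2 * w₅ * w₇ - w₅ * w₆ + w₅^2 + w₄ * w₇
      + w₄ * w₅ - w₃ * w₇ + 1/2 * w₃^2 - 2 * w₂ * w₇ + w₂ * w₃ + w₂^2 + w₁ * w₇ - w₁ * w₂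
      + c * (4 * w₇^2 + w₆^2 + 2 * w₅ * w₇ - 2 * w₃ * w₇ - w₃^2 - 4 * w₂ * w₇ + w₂^2)
      + c^2 * (-2 * w₇^2 - 4 * w₅ * w₇ - 2 * w₅^2 + 4 * w₃ * w₇ + 4 * w₂ * w₇ - 2 * w₂^2)
      - 4 * c^3 * w₇^2) * h_cubic
  have h₁ : 0 ≤ c := by linarith
  have h₂ : 0 ≤ 2 * c ^ 2 - 1 := by nlinarith
  have h₄ : 0 ≤ c - 1 / 2 := by linarith
  have h₅ : 0 ≤ 1 + c - 2 * c ^ 2 := by nlinarith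
  linarith [h_sos,
    mul_nonneg h₁ (sq_nonneg (w₁ + (4 * c ^ 2 - 2 * c - 2) * w₂ + (2 + 2 * c - 4 * c ^ 2) * w₇)),
    mul_nonneg h₂ (sq_nonneg (w₂ + (1 - 2 * c) * w₃ + (4 * c ^ 2 - 2 * c - 1) * w₇)),
    sq_nonneg (w₃ - w₄ + (4 * c ^ 2 - 2 * c - 1) * w₇),
    mul_nonneg h₄ (sq_nonneg (w₄ + (2 - 4 * c ^ 2) * w₅ + (2 + 2 * c - 4 * c ^ 2) * w₇)),
    mul_nonneg h₅ (sq_nonneg (w₅ - 2 * c * w₆ + w₇))]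

lemma twisted_cycle_cos_sub_le (y₁ y₂ y₃ y₄ y₅ y₆ y₇ θ₁ θ₂ θ₃ θ₄ θ₅ θ₆ θ₇ : ℝ) :
    y₁ * y₂ * cos (θ₂ - θ₁) + y₂ * y₃ * cos (θ₃ - θ₂) + y₃ * y₄ * cos (θ₄ - θ₃) +
        y₄ * y₅ * cos (θ₅ - θ₄) + y₅ * y₆ * cos (θ₆ - θ₅) + y₆ * y₇ * cos (θ₇ - θ₆) -
        y₇ * y₁ * cos (θ₇ - θ₁) ≤
      cos (π / 7) * (y₁ ^ 2 + y₂ ^ 2 + y₃ ^ 2 + y₄ ^ 2 + y₅ ^ 2 + y₆ ^ 2 + y₇ ^ 2) := by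
  have h_cos := twisted_cycle_form_le (y₁ * cos θ₁) (y₂ * cos θ₂) (y₃ * cos θ₃) (y₄ * cos θ₄)
    (y₅ * cos θ₅) (y₆ * cos θ₆) (y₇ * cos θ₇)
  have h_sin := twisted_cycle_form_le (y₁ * sin θ₁) (y₂ * sin θ₂) (y₃ * sin θ₃) (y₄ * sin θ₄)
    (y₅ * sin θ₅) (y₆ * sin θ₆) (y₇ * sin θ₇)
  simp only [cos_sub]
  linear_combination h_cos + h_sin +
    cos (π / 7) * (y₁ ^ 2 * sin_sq_add_cos_sq θ₁ + y₂ ^ 2 * sin_sq_add_cos_sq θ₂ +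
      y₃ ^ 2 * sin_sq_add_cos_sq θ₃ + y₄ ^ 2 * sin_sq_add_cos_sq θ₄ +
      y₅ ^ 2 * sin_sq_add_cos_sq θ₅ + y₆ ^ 2 * sin_sq_add_cos_sq θ₆ +
      y₇ ^ 2 * sin_sq_add_cos_sq θ₇)

lemma cyclic_mul_cos_le_of_sum_eq_pi (y₁ y₂ y₃ y₄ y₅ y₆ y₇ β₁ β₂ β₃ β₄ β₅ β₆ β₇ : ℝ)
    (hsum : β₁ + β₂ + β₃ + β₄ + β₅ + β₆ + β₇ = π) :
    y₁ * y₂ * cos β₁ + y₂ * y₃ * cos β₂ + y₃ * y₄ * cos β₃ + y₄ * y₅ * cos β₄ +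
        y₅ * y₆ * cos β₅ + y₆ * y₇ * cos β₆ + y₇ * y₁ * cos β₇ ≤
      cos (π / 7) * (y₁ ^ 2 + y₂ ^ 2 + y₃ ^ 2 + y₄ ^ 2 + y₅ ^ 2 + y₆ ^ 2 + y₇ ^ 2) := by
  have h := twisted_cycle_cos_sub_le y₁ y₂ y₃ y₄ y₅ y₆ y₇ 0 β₁ (β₁ + β₂) (β₁ + β₂ + β₃)
    (β₁ + β₂ + β₃ + β₄) (β₁ + β₂ + β₃ + β₄ + β₅) (β₁ + β₂ + β₃ + β₄ + β₅ + β₆)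
  simp only [sub_zero, add_sub_cancel_left] at h
  rw [show β₁ + β₂ + β₃ + β₄ + β₅ + β₆ = π - β₇ by linarith, cos_pi_sub] at h
  linarith

lemma exists_mul_cycle_seven_eq {b₁ b₂ b₃ b₄ b₅ b₆ b₇ : ℝ} (hb₁ : 0 < b₁) (hb₂ : 0 < b₂)
    (hb₃ : 0 < b₃) (hb₄ : 0 < b₄) (hb₅ : 0 < b₅) (hb₆ : 0 < b₆) (hb₇ : 0 < b₇) :
    ∃ y₁ y₂ y₃ y₄ y₅ y₆ y₇ : ℝ, b₁ = y₁ * y₂ ∧ b₂ = y₂ * y₃ ∧ b₃ = y₃ * y₄ ∧ b₄ = y₄ * y₅ ∧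
      b₅ = y₅ * y₆ ∧ b₆ = y₆ * y₇ ∧ b₇ = y₇ * y₁ := by
  set y := √(b₁ * b₃ * b₅ * b₇ / (b₂ * b₄ * b₆))
  have hy : 0 < y := sqrt_pos.mpr (by positivity)
  have hy_sq : y ^ 2 = b₁ * b₃ * b₅ * b₇ / (b₂ * b₄ * b₆) := sq_sqrt (by positivity)
  refine ⟨y, b₁ / y, b₂ * y / b₁, b₁ * b₃ / (b₂ * y), b₂ * b₄ * y / (b₁ * b₃),
    b₁ * b₃ * b₅ / (b₂ * b₄ * y), b₂ * b₄ * b₆ * y / (b₁ * b₃ * b₅), ?_, ?_, ?_, ?_, ?_, ?_, ?_⟩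
  all_goals field_simp
  rw [hy_sq]
  field_simp

theorem heptagonal_inequality_general
    (a₁ a₂ a₃ a₄ a₅ a₆ a₇ α₁ α₂ α₃ α₄ α₅ α₆ α₇ : ℝ)
    (ha₁ : 0 < a₁) (ha₂ : 0 < a₂) (ha₃ : 0 < a₃) (ha₄ : 0 < a₄) (ha₅ : 0 < a₅)
    (ha₆ : 0 < a₆) (ha₇ : 0 < a₇)
    (hsum : α₁ + α₂ + α₃ + α₄ + α₅ + α₆ + α₇ = Real.pi) :
    a₁ * Real.cos α₁ + a₂ * Real.cos α₂ + a₃ * Real.cos α₃ + a₄ * Real.cos α₄ +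
        a₅ * Real.cos α₅ + a₆ * Real.cos α₆ + a₇ * Real.cos α₇ ≤
      Real.cos (Real.pi / 7) * (1 / (a₁ * a₂ * a₃ * a₄ * a₅ * a₆ * a₇)) *
        psi (a₁ ^ 2) (a₂ ^ 2) (a₃ ^ 2) (a₄ ^ 2) (a₅ ^ 2) (a₆ ^ 2) (a₇ ^ 2) := by
  have h_prod : a₁ * a₂ * a₃ * a₄ * a₅ * a₆ * a₇ ≠ 0 := by positivity
  obtain ⟨y₁, y₂, y₃, y₄, y₅, y₆, y₇, rfl, rfl, rfl, rfl, rfl, rfl, rfl⟩ :=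
    exists_mul_cycle_seven_eq ha₁ ha₄ ha₇ ha₃ ha₆ ha₂ ha₅
  have h_psi : psi ((y₁ * y₂) ^ 2) ((y₆ * y₇) ^ 2) ((y₄ * y₅) ^ 2) ((y₂ * y₃) ^ 2)
      ((y₇ * y₁) ^ 2) ((y₅ * y₆) ^ 2) ((y₃ * y₄) ^ 2) =
      (y₁ * y₂ * (y₆ * y₇) * (y₄ * y₅) * (y₂ * y₃) * (y₇ * y₁) * (y₅ * y₆) * (y₃ * y₄)) *
        (y₁ ^ 2 + y₂ ^ 2 + y₃ ^ 2 + y₄ ^ 2 + y₅ ^ 2 + y₆ ^ 2 + y₇ ^ 2) := by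
    unfold psi; ring
  rw [h_psi, one_div, mul_assoc (cos _), inv_mul_cancel_left₀ h_prod]
  linarith [cyclic_mul_cos_le_of_sum_eq_pi y₁ y₂ y₃ y₄ y₅ y₆ y₇ α₁ α₄ α₇ α₃ α₆ α₂ α₅
    (by linarith)]

/-- **Heptagonal Inequality (normal form).** -/
theorem heptagonal_inequality
    (a₁ a₂ a₃ a₄ a₅ a₆ a₇ α₁ α₂ α₃ α₄ α₅ α₆ α₇ : ℝ)
    (ha₁ : 0 < a₁) (ha₂ : 0 < a₂) (ha₃ : 0 < a₃) (ha₄ : 0 < a₄) (ha₅ : 0 < a₅)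
    (ha₆ : 0 < a₆) (ha₇ : 0 < a₇)
    (hα₁ : 0 < α₁) (hα₂ : 0 < α₂) (hα₃ : 0 < α₃) (hα₄ : 0 < α₄) (hα₅ : 0 < α₅)
    (hα₆ : 0 < α₆) (hα₇ : 0 < α₇)
    (hsum : α₁ + α₂ + α₃ + α₄ + α₅ + α₆ + α₇ = Real.pi) :
    a₁ * Real.cos α₁ + a₂ * Real.cos α₂ + a₃ * Real.cos α₃ + a₄ * Real.cos α₄ +
        a₅ * Real.cos α₅ + a₆ * Real.cos α₆ + a₇ * Real.cos α₇ ≤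
      Real.cos (Real.pi / 7) * (1 / (a₁ * a₂ * a₃ * a₄ * a₅ * a₆ * a₇)) *
        psi (a₁ ^ 2) (a₂ ^ 2) (a₃ ^ 2) (a₄ ^ 2) (a₅ ^ 2) (a₆ ^ 2) (a₇ ^ 2) :=
  heptagonal_inequality_general a₁ a₂ a₃ a₄ a₅ a₆ a₇ α₁ α₂ α₃ α₄ α₅ α₆ α₇ ha₁ ha₂ ha₃ ha₄ ha₅ ha₆
    ha₇ hsum
end

section
/- Let x₁, x₂, x₃, x₄, x₅ and α₁, α₂, α₃, α₄, α₅ be positive real numbers with α₁ + α₂ + α₃ + α₄ + α₅ = π. Then, with x₆ = x₁, one has ∑_{i=1}^5 xᵢ xᵢ₊₁ cos αᵢ ≤ cos(π/5) · ∑_{i=1}^5 xᵢ². (This is Tóth's inequality for n = 5, which the paper derives from the normal form of the Pentagonal Inequality, showing that the Pentagonal Inequality is sharp.) -/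
/-!
Place planar vectors `vᵢ` of length `xᵢ` at the successive angles `0, α₁, α₁ + α₂, …`. Then
`xᵢ xᵢ₊₁ cos αᵢ = ⟪vᵢ, vᵢ₊₁⟫` for `i < 5`, while `α₁ + ⋯ + α₅ = π` turns the last term into
`-⟪v₅, v₁⟫`. Coordinatewise, the inequality becomes the bound `cos (π / 5)` on the quadratic form
`u₁u₂ + u₂u₃ + u₃u₄ + u₄u₅ - u₅u₁` of the twisted 5-cycle, whose eigenvalues are `cos ((2k+1)π/5)`.
-/

open Real

theorem twisted_cycle_form_le_s6 (u₁ u₂ u₃ u₄ u₅ : ℝ) :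
    u₁ * u₂ + u₂ * u₃ + u₃ * u₄ + u₄ * u₅ - u₅ * u₁ ≤
      cos (π / 5) * (u₁ ^ 2 + u₂ ^ 2 + u₃ ^ 2 + u₄ ^ 2 + u₅ ^ 2) := by
  rw [cos_pi_div_five]
  set s := √5
  have hs : s ^ 2 = 5 := sq_sqrt (by norm_num)
  have hs_ge : 1 ≤ s := by nlinarith [sqrt_nonneg 5]
  have sos : (1 + s) / 4 * (u₁ ^ 2 + u₂ ^ 2 + u₃ ^ 2 + u₄ ^ 2 + u₅ ^ 2) -
      (u₁ * u₂ + u₂ * u₃ + u₃ * u₄ + u₄ * u₅ - u₅ * u₁) =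
      (1 + s) / 4 * (u₁ + (1 - s) / 2 * u₂ + (s - 1) / 2 * u₅) ^ 2
      + 1 / 2 * (u₂ - u₃ + (s - 1) / 2 * u₅) ^ 2
      + (s - 1) / 4 * (u₃ - (1 + s) / 2 * u₄ + u₅) ^ 2 := by
    linear_combination (-1/16 * u₅ ^ 2 + 1/4 * u₄ * u₅ - 1/16 * u₄ ^ 2 + 1/4 * u₃ * u₄
      - 1/8 * u₂ * u₅ + 1/16 * u₂ ^ 2 - 1/4 * u₁ * u₅ + 1/4 * u₁ * u₂ - 1/16 * s * u₅ ^ 2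
      - 1/16 * s * u₄ ^ 2 + 1/8 * s * u₂ * u₅ - 1/16 * s * u₂ ^ 2) * hs
  have : 0 ≤ (1 + s) / 4 * (u₁ + (1 - s) / 2 * u₂ + (s - 1) / 2 * u₅) ^ 2
      + 1 / 2 * (u₂ - u₃ + (s - 1) / 2 * u₅) ^ 2
      + (s - 1) / 4 * (u₃ - (1 + s) / 2 * u₄ + u₅) ^ 2 := by
    have : 0 ≤ s - 1 := by linarith
    positivity
  linarith

theorem twisted_cycle_polar_le (x₁ x₂ x₃ x₄ x₅ θ₁ θ₂ θ₃ θ₄ θ₅ : ℝ) :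
    x₁ * x₂ * cos (θ₂ - θ₁) + x₂ * x₃ * cos (θ₃ - θ₂) + x₃ * x₄ * cos (θ₄ - θ₃) +
        x₄ * x₅ * cos (θ₅ - θ₄) - x₅ * x₁ * cos (θ₅ - θ₁) ≤
      cos (π / 5) * (x₁ ^ 2 + x₂ ^ 2 + x₃ ^ 2 + x₄ ^ 2 + x₅ ^ 2) := by
  have hx : ∀ x θ : ℝ, (x * cos θ) ^ 2 + (x * sin θ) ^ 2 = x ^ 2 := fun x θ => by
    linear_combination x ^ 2 * cos_sq_add_sin_sq θ
  have hcos := twisted_cycle_form_le_s6 (x₁ * cos θ₁) (x₂ * cos θ₂) (x₃ * cos θ₃) (x₄ * cos θ₄)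
    (x₅ * cos θ₅)
  have hsin := twisted_cycle_form_le_s6 (x₁ * sin θ₁) (x₂ * sin θ₂) (x₃ * sin θ₃) (x₄ * sin θ₄)
    (x₅ * sin θ₅)
  simp only [cos_sub]
  rw [← hx x₁ θ₁, ← hx x₂ θ₂, ← hx x₃ θ₃, ← hx x₄ θ₄, ← hx x₅ θ₅]
  linarith

theorem toth_inequality_five_general
    (x₁ x₂ x₃ x₄ x₅ α₁ α₂ α₃ α₄ α₅ : ℝ)
    (hsum : α₁ + α₂ + α₃ + α₄ + α₅ = Real.pi) :
    x₁ * x₂ * Real.cos α₁ + x₂ * x₃ * Real.cos α₂ + x₃ * x₄ * Real.cos α₃ +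
        x₄ * x₅ * Real.cos α₄ + x₅ * x₁ * Real.cos α₅ ≤
      Real.cos (Real.pi / 5) * (x₁ ^ 2 + x₂ ^ 2 + x₃ ^ 2 + x₄ ^ 2 + x₅ ^ 2) := by
  have h := twisted_cycle_polar_le x₁ x₂ x₃ x₄ x₅ 0 α₁ (α₁ + α₂) (α₁ + α₂ + α₃)
    (α₁ + α₂ + α₃ + α₄)
  have hα₅ : cos α₅ = -cos (α₁ + α₂ + α₃ + α₄) := by
    rw [← cos_pi_sub]; congr 1; linarith
  simp only [sub_zero, add_sub_cancel_left] at h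
  rw [hα₅]
  linarith

/-- **Tóth's inequality for `n = 5`** (with cyclic indices, `x₆ = x₁`). -/
theorem toth_inequality_five
    (x₁ x₂ x₃ x₄ x₅ α₁ α₂ α₃ α₄ α₅ : ℝ)
    (hx₁ : 0 < x₁) (hx₂ : 0 < x₂) (hx₃ : 0 < x₃) (hx₄ : 0 < x₄) (hx₅ : 0 < x₅)
    (hα₁ : 0 < α₁) (hα₂ : 0 < α₂) (hα₃ : 0 < α₃) (hα₄ : 0 < α₄) (hα₅ : 0 < α₅)
    (hsum : α₁ + α₂ + α₃ + α₄ + α₅ = Real.pi) :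
    x₁ * x₂ * Real.cos α₁ + x₂ * x₃ * Real.cos α₂ + x₃ * x₄ * Real.cos α₃ +
        x₄ * x₅ * Real.cos α₄ + x₅ * x₁ * Real.cos α₅ ≤
      Real.cos (Real.pi / 5) * (x₁ ^ 2 + x₂ ^ 2 + x₃ ^ 2 + x₄ ^ 2 + x₅ ^ 2) :=
  toth_inequality_five_general x₁ x₂ x₃ x₄ x₅ α₁ α₂ α₃ α₄ α₅ hsum
end

section
/- Let a₁ ≤ a₂ ≤ a₃ ≤ a₄ ≤ a₅ be positive real numbers with a₂ < a₄. Then φ(a₁², a₅², a₂², a₃², a₄²) < φ(a₁², a₂², a₃², a₄², a₅²). -/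
theorem phi_sub_phi_cycleTail (x₁ x₂ x₃ x₄ x₅ : ℝ) :
    phi x₁ x₂ x₃ x₄ x₅ - phi x₁ x₅ x₂ x₃ x₄ = x₃ * (x₄ - x₂) * (x₅ - x₁) := by
  unfold phi
  ring

theorem phi_cycleTail_lt {x₁ x₂ x₃ x₄ x₅ : ℝ} (hx₃ : 0 < x₃) (h24 : x₂ < x₄) (h15 : x₁ < x₅) :
    phi x₁ x₅ x₂ x₃ x₄ < phi x₁ x₂ x₃ x₄ x₅ := by
  have hpos : 0 < x₃ * (x₄ - x₂) * (x₅ - x₁) :=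
    mul_pos (mul_pos hx₃ (sub_pos.2 h24)) (sub_pos.2 h15)
  linarith [phi_sub_phi_cycleTail x₁ x₂ x₃ x₄ x₅]

theorem phi_strict_lt_general (a₁ a₂ a₃ a₄ a₅ : ℝ)
    (ha₁ : 0 < a₁) (ha₂ : 0 < a₂) (ha₃ : 0 < a₃)
    (h12 : a₁ ≤ a₂) (h45 : a₄ ≤ a₅)
    (h24 : a₂ < a₄) :
    phi (a₁ ^ 2) (a₅ ^ 2) (a₂ ^ 2) (a₃ ^ 2) (a₄ ^ 2) <
      phi (a₁ ^ 2) (a₂ ^ 2) (a₃ ^ 2) (a₄ ^ 2) (a₅ ^ 2) := by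
  have h15 : a₁ < a₅ := h12.trans_lt (h24.trans_le h45)
  exact phi_cycleTail_lt (pow_pos ha₃ 2) (pow_lt_pow_left₀ h24 ha₂.le two_ne_zero)
    (pow_lt_pow_left₀ h15 ha₁.le two_ne_zero)

/-- If `0 < a₁ ≤ a₂ ≤ a₃ ≤ a₄ ≤ a₅` and `a₂ < a₄`, then
`φ(a₁², a₅², a₂², a₃², a₄²) < φ(a₁², a₂², a₃², a₄², a₅²)`. -/
theorem phi_strict_lt (a₁ a₂ a₃ a₄ a₅ : ℝ)
    (ha₁ : 0 < a₁) (ha₂ : 0 < a₂) (ha₃ : 0 < a₃) (ha₄ : 0 < a₄) (ha₅ : 0 < a₅)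
    (h12 : a₁ ≤ a₂) (h23 : a₂ ≤ a₃) (h34 : a₃ ≤ a₄) (h45 : a₄ ≤ a₅)
    (h24 : a₂ < a₄) :
    phi (a₁ ^ 2) (a₅ ^ 2) (a₂ ^ 2) (a₃ ^ 2) (a₄ ^ 2) <
      phi (a₁ ^ 2) (a₂ ^ 2) (a₃ ^ 2) (a₄ ^ 2) (a₅ ^ 2) :=
  phi_strict_lt_general a₁ a₂ a₃ a₄ a₅ ha₁ ha₂ ha₃ h12 h45 h24
end
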